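/- If all cost functions of a quantitative game are upper-semicontinuous, then every weak subgame perfect equilibrium is a subgame perfect equilibrium (hence SPE, weak SPE, and very weak SPE coincide). -/

import Mathlib

open Classical

noncomputable section

/-- A multiplayer turn-based quantitative game on a directed graph:
`owner` assigns each vertex to a player, `E` is the edge relation (every
vertex has a successor), and `cost i` is player `i`'s cost function on
infinite sequences of vertices (to be minimized), valued in `ℝ ∪ {±∞}`. -/
structure QGame (P V : Type) where
  owner : V → P
  E : V → V → Prop
  succ_exists : ∀ v, ∃ v', E v v'
  cost : P → (ℕ → V) → EReal

namespace QGame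

variable {P V : Type}

/-- An infinite play of the game: consecutive vertices are joined by edges. -/
def IsPlay (G : QGame P V) (ρ : ℕ → V) : Prop := ∀ n, G.E (ρ n) (ρ (n + 1))

/-- Concatenation `hρ` of a finite history `h` with an infinite play `ρ`. -/
def prepend (h : List V) (ρ : ℕ → V) : ℕ → V := fun n =>
  if hn : n < h.length then h.get ⟨n, hn⟩ else ρ (n - h.length)

/-- The prefix of length `n` of a play, as a list. -/
def playPrefix (ρ : ℕ → V) (n : ℕ) : List V := List.ofFn fun k : Fin n => ρ k

/-- `hv` is a history of the game initialized at `v0`: here `h` is the strict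
past and `v` the current vertex; the sequence `h ++ [v]` starts at `v0` and
follows edges. -/
def IsHist (G : QGame P V) (v0 : V) (h : List V) (v : V) : Prop :=
  (h ++ [v]).head? = some v0 ∧ List.Chain' G.E (h ++ [v])

/-- A (turn-based) strategy profile: given the past history and the current
vertex, choose the next vertex.  An individual strategy of player `i` is of
the same type; only its values at vertices owned by `i` matter. -/
abbrev Strat (P V : Type) := List V → V → V

/-- A profile/strategy is valid if it always follows edges. -/
def Valid (G : QGame P V) (σ : Strat P V) : Prop := ∀ h v, G.E v (σ h v)

/-- History/current-vertex pair produced after `n` steps of `σ` from `v`. -/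
def outcomeAux (σ : Strat P V) (v : V) : ℕ → List V × V
  | 0 => ([], v)
  | n + 1 =>
      let p := outcomeAux σ v n
      (p.1 ++ [p.2], σ p.1 p.2)

/-- The outcome play of profile `σ` from initial vertex `v`. -/
def outcome (σ : Strat P V) (v : V) (n : ℕ) : V := (outcomeAux σ v n).2

/-- The profile where player `i` unilaterally deviates to strategy `τ`
from the profile `σ`. -/
def devProf (G : QGame P V) (σ τ : Strat P V) (i : P) : Strat P V :=
  fun h v => if G.owner v = i then τ h v else σ h v

/-- The set of deviation steps of `τ` from `σ` (for player `i`, from `v`):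
positions `n` along the outcome of the deviated profile where the current
vertex belongs to player `i` and `τ` disagrees with `σ`. -/
def devSteps (G : QGame P V) (σ τ : Strat P V) (i : P) (v : V) : Set ℕ :=
  {n | G.owner (outcome (G.devProf σ τ i) v n) = i ∧
       σ (outcomeAux (G.devProf σ τ i) v n).1 (outcome (G.devProf σ τ i) v n) ≠
       τ (outcomeAux (G.devProf σ τ i) v n).1 (outcome (G.devProf σ τ i) v n)}

/-- `τ` is finitely deviating from `σ`. -/
def FinDev (G : QGame P V) (σ τ : Strat P V) (i : P) (v : V) : Prop :=
  (G.devSteps σ τ i v).Finite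

/-- `τ` is one-shot deviating from `σ`: its unique deviation step is at the
initial vertex. -/
def OneShotDev (G : QGame P V) (σ τ : Strat P V) (i : P) (v : V) : Prop :=
  G.devSteps σ τ i v = {0}

/-- Nash equilibrium of the profile `σ` from `v`, with respect to a cost
assignment `c` (no player has a profitable unilateral deviation). -/
def IsNEwith (G : QGame P V) (c : P → (ℕ → V) → EReal) (σ : Strat P V) (v : V) : Prop :=
  ∀ i τ, G.Valid τ →
    c i (outcome σ v) ≤ c i (outcome (G.devProf σ τ i) v)

/-- Weak Nash equilibrium: no profitable finitely deviating strategy. -/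
def IsWeakNEwith (G : QGame P V) (c : P → (ℕ → V) → EReal) (σ : Strat P V) (v : V) : Prop :=
  ∀ i τ, G.Valid τ → G.FinDev σ τ i v →
    c i (outcome σ v) ≤ c i (outcome (G.devProf σ τ i) v)

/-- Very weak Nash equilibrium: no profitable one-shot deviating strategy. -/
def IsVeryWeakNEwith (G : QGame P V) (c : P → (ℕ → V) → EReal) (σ : Strat P V) (v : V) : Prop :=
  ∀ i τ, G.Valid τ → G.OneShotDev σ τ i v →
    c i (outcome σ v) ≤ c i (outcome (G.devProf σ τ i) v)

/-- The strategy profile induced by `σ` in the subgame after history `h`. -/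
def subStrat (σ : Strat P V) (h : List V) : Strat P V := fun g v => σ (h ++ g) v

/-- The cost functions of the subgame after history `h`. -/
def subCost (G : QGame P V) (h : List V) : P → (ℕ → V) → EReal :=
  fun i ρ => G.cost i (prepend h ρ)

/-- Subgame perfect equilibrium: Nash equilibrium in every subgame. -/
def IsSPE (G : QGame P V) (v0 : V) (σ : Strat P V) : Prop :=
  ∀ h v, G.IsHist v0 h v → G.IsNEwith (G.subCost h) (subStrat σ h) v

/-- Weak subgame perfect equilibrium: weak NE in every subgame. -/
def IsWeakSPE (G : QGame P V) (v0 : V) (σ : Strat P V) : Prop :=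
  ∀ h v, G.IsHist v0 h v → G.IsWeakNEwith (G.subCost h) (subStrat σ h) v

/-- Very weak subgame perfect equilibrium: very weak NE in every subgame. -/
def IsVeryWeakSPE (G : QGame P V) (v0 : V) (σ : Strat P V) : Prop :=
  ∀ h v, G.IsHist v0 h v → G.IsVeryWeakNEwith (G.subCost h) (subStrat σ h) v

/-- One elimination step: `ρ` (a potential outcome in the subgame after `h`)
is erased if some player `i` controlling a vertex `ρ n` along `hρ` has an
alternative edge to some `v' ≠ ρ (n+1)` such that every play `ρ'` in the
current potential set after the extended history gives `i` a strictly
smaller cost than `hρ`. -/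
def Eset (G : QGame P V) (Pr : List V → V → Set (ℕ → V)) (h : List V) :
    Set (ℕ → V) :=
  {ρ | ∃ n v', G.E (ρ n) v' ∧ v' ≠ ρ (n + 1) ∧
      ∀ ρ' ∈ Pr (h ++ playPrefix ρ (n + 1)) v',
        G.cost (G.owner (ρ n)) (prepend (h ++ playPrefix ρ (n + 1)) ρ') <
          G.cost (G.owner (ρ n)) (prepend h ρ)}

/-- The transfinite sequence `P_α(hv)` of sets of potential outcomes of weak
Nash equilibria in the subgame `(G|_h, v)`: all plays at stage `0`, removal
of `E_α` at successors, intersections at limits. -/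
def Pset (G : QGame P V) (α : Ordinal) : List V → V → Set (ℕ → V) :=
  Ordinal.limitRecOn (motive := fun _ => List V → V → Set (ℕ → V)) α
    (fun _h v => {ρ | G.IsPlay ρ ∧ ρ 0 = v})
    (fun _ Pr => fun h v => Pr h v \ G.Eset Pr h)
    (fun α _ Pr => fun h v => ⋂ (β : Ordinal) (hβ : β < α), Pr β hβ h v)

/-- A sequence of plays converges to `ρ` (in the product topology on `V^ω`
with `V` discrete) iff every finite prefix of `ρ` is eventually a prefix of
the members of the sequence. -/
def Converges (ρs : ℕ → ℕ → V) (ρ : ℕ → V) : Prop :=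
  ∀ m, ∃ N, ∀ n ≥ N, ∀ k ≤ m, ρs n k = ρ k

/-- Upper semicontinuity of a cost function on plays. -/
def USCcost (G : QGame P V) (c : (ℕ → V) → EReal) : Prop :=
  ∀ (ρs : ℕ → ℕ → V) (ρ : ℕ → V), (∀ n, G.IsPlay (ρs n)) → G.IsPlay ρ →
    Converges ρs ρ →
      Filter.limsup (fun n => c (ρs n)) Filter.atTop ≤ c ρ

/-- A strategy (profile) is finite-memory if it is computed by a Moore
machine: a finite set `M` of memory states, updated while reading the
history, determines the move. -/
def FinMem (σ : Strat P V) : Prop :=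
  ∃ (M : Type) (_ : Finite M) (m0 : M) (upd : M → V → M) (act : M → V → V),
    ∀ h v, σ h v = act (h.foldl upd m0) v

/-- Quantitative reachability cost: the least index at which `ρ` visits the
target set `T`, and `+∞` if `T` is never visited. -/
def reachCost (T : Set V) (ρ : ℕ → V) : EReal :=
  if h : ∃ n, ρ n ∈ T then ((Nat.find h : ℕ) : EReal) else ⊤

/-- `G` is a quantitative reachability game with target sets `T i`. -/
def IsReachGame (G : QGame P V) (T : P → Set V) : Prop :=
  ∀ i ρ, G.cost i ρ = reachCost (T i) ρ

/-- The set of players that have not visited their target set along the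
history `h`. -/
def Iset (T : P → Set V) (h : List V) : Set P := {i | ∀ u ∈ h, u ∉ T i}

end QGame

/-!
A deviation whose deviation steps all come before step `N + 1` differs from its truncation at
step `N` only by a one-shot deviation in the subgame reached after `N` steps, so induction on `N`
turns a very weak SPE into a weak SPE.  An arbitrary deviation is the limit of its truncations,
which deviate finitely often and hence are unprofitable against a weak SPE; upper
semicontinuity of the costs makes the limit unprofitable as well.
-/

namespace QGame

variable {P V : Type}

lemma playPrefix_succ (ρ : ℕ → V) (n : ℕ) :
    playPrefix ρ (n + 1) = playPrefix ρ n ++ [ρ n] := by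
  rw [playPrefix, List.ofFn_succ', List.concat_eq_append]
  simp [playPrefix]

@[simp]
lemma length_playPrefix (ρ : ℕ → V) (n : ℕ) : (playPrefix ρ n).length = n := by
  simp [playPrefix]

@[simp]
lemma getElem_playPrefix (ρ : ℕ → V) (n k : ℕ) (hk : k < (playPrefix ρ n).length) :
    (playPrefix ρ n)[k] = ρ k := by
  simp [playPrefix]

lemma prepend_of_lt {h : List V} (ρ : ℕ → V) {n : ℕ} (hn : n < h.length) :
    prepend h ρ n = h[n] := by
  simp [prepend, hn]

lemma prepend_of_le {h : List V} (ρ : ℕ → V) {n : ℕ} (hn : h.length ≤ n) :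
    prepend h ρ n = ρ (n - h.length) := by
  simp [prepend, Nat.not_lt_of_le hn]

lemma prepend_append (h g : List V) (ρ : ℕ → V) :
    prepend (h ++ g) ρ = prepend h (prepend g ρ) := by
  funext n
  rcases lt_or_ge n h.length with hn | hn
  · rw [prepend_of_lt _ (by simp; omega), prepend_of_lt _ hn, List.getElem_append_left hn]
  rw [prepend_of_le _ hn]
  rcases lt_or_ge n (h.length + g.length) with hn' | hn'
  · rw [prepend_of_lt _ (by simp; omega), prepend_of_lt _ (by omega),
      List.getElem_append_right hn]
  · rw [prepend_of_le _ (by simp; omega), prepend_of_le _ (by omega)]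
    simp [Nat.sub_add_eq]

lemma prepend_playPrefix (π : ℕ → V) (n : ℕ) :
    prepend (playPrefix π n) (fun m => π (n + m)) = π := by
  funext k
  rcases lt_or_ge k n with hk | hk
  · rw [prepend_of_lt _ (by simpa using hk), getElem_playPrefix]
  · rw [prepend_of_le _ (by simpa using hk), length_playPrefix]
    congr 1
    omega

lemma prepend_eq_getElem {h : List V} {v : V} {ρ : ℕ → V} (h0 : ρ 0 = v) {n : ℕ}
    (hn : n < (h ++ [v]).length) : prepend h ρ n = (h ++ [v])[n] := by
  rcases lt_or_ge n h.length with hn' | hn'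
  · rw [prepend_of_lt _ hn', List.getElem_append_left hn']
  · have : n = h.length := by simp at hn; omega
    subst this
    simp [prepend_of_le, h0]

lemma isPlay_prepend (G : QGame P V) {h : List V} {v : V} {ρ : ℕ → V}
    (hh : List.IsChain G.E (h ++ [v])) (hρ : G.IsPlay ρ) (h0 : ρ 0 = v) :
    G.IsPlay (prepend h ρ) := by
  intro n
  by_cases hn : n < h.length
  · rw [prepend_eq_getElem h0 (by simp; omega), prepend_eq_getElem h0 (by simp; omega)]
    exact List.isChain_iff_getElem.mp hh n (by simp; omega)
  · rw [prepend_of_le _ (by omega), prepend_of_le _ (by omega),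
      show n + 1 - h.length = n - h.length + 1 by omega]
    exact hρ _

lemma IsHist.snoc {G : QGame P V} {v0 v w : V} {h : List V} (hh : G.IsHist v0 h v)
    (hvw : G.E v w) : G.IsHist v0 (h ++ [v]) w := by
  refine ⟨by simpa [List.head?_append] using hh.1, List.isChain_append.mpr ⟨hh.2, ?_, ?_⟩⟩
  · exact List.isChain_singleton w
  · simpa using hvw

lemma IsHist.append_playPrefix {G : QGame P V} {v0 v : V} {h : List V} (hh : G.IsHist v0 h v)
    {π : ℕ → V} (hπ : G.IsPlay π) (h0 : π 0 = v) (n : ℕ) :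
    G.IsHist v0 (h ++ playPrefix π n) (π n) := by
  induction n with
  | zero => simpa [playPrefix, h0] using hh
  | succ n ih => simpa [playPrefix_succ] using ih.snoc (hπ n)

lemma outcomeAux_succ (σ : Strat P V) (v : V) (n : ℕ) :
    outcomeAux σ v (n + 1) =
      ((outcomeAux σ v n).1 ++ [(outcomeAux σ v n).2],
        σ (outcomeAux σ v n).1 (outcomeAux σ v n).2) := rfl

lemma outcomeAux_fst (σ : Strat P V) (v : V) (n : ℕ) :
    (outcomeAux σ v n).1 = playPrefix (outcome σ v) n := by
  induction n with
  | zero => rfl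
  | succ n ih => rw [outcomeAux_succ, ih, playPrefix_succ]; rfl

@[simp]
lemma length_outcomeAux_fst (σ : Strat P V) (v : V) (n : ℕ) :
    (outcomeAux σ v n).1.length = n := by
  rw [outcomeAux_fst, length_playPrefix]

lemma outcome_isPlay (G : QGame P V) {σ : Strat P V} (hσ : G.Valid σ) (v : V) :
    G.IsPlay (outcome σ v) :=
  fun _ => hσ _ _

lemma outcomeAux_congr {σ₁ σ₂ : Strat P V} {v : V} {n : ℕ}
    (h : ∀ m < n, σ₁ (outcomeAux σ₁ v m).1 (outcomeAux σ₁ v m).2 =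
      σ₂ (outcomeAux σ₁ v m).1 (outcomeAux σ₁ v m).2) :
    outcomeAux σ₁ v n = outcomeAux σ₂ v n := by
  induction n with
  | zero => rfl
  | succ n ih =>
    rw [outcomeAux_succ, outcomeAux_succ, ← ih fun m hm => h m (by omega), ← h n (by omega)]

lemma outcome_congr {σ₁ σ₂ : Strat P V} {v : V}
    (h : ∀ m, σ₁ (outcomeAux σ₁ v m).1 (outcomeAux σ₁ v m).2 =
      σ₂ (outcomeAux σ₁ v m).1 (outcomeAux σ₁ v m).2) :
    outcome σ₁ v = outcome σ₂ v :=
  funext fun _ => congrArg Prod.snd (outcomeAux_congr fun m _ => h m)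

lemma subStrat_subStrat (σ : Strat P V) (h g : List V) :
    subStrat (subStrat σ h) g = subStrat σ (h ++ g) := by
  funext g' u
  simp [subStrat]

lemma subStrat_devProf (G : QGame P V) (σ τ : Strat P V) (i : P) (g : List V) :
    subStrat (G.devProf σ τ i) g = G.devProf (subStrat σ g) (subStrat τ g) i := rfl

lemma Valid.subStrat {G : QGame P V} {σ : Strat P V} (hσ : G.Valid σ) (h : List V) :
    G.Valid (subStrat σ h) :=
  fun g v => hσ (h ++ g) v

lemma Valid.devProf {G : QGame P V} {σ τ : Strat P V} (hσ : G.Valid σ) (hτ : G.Valid τ)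
    (i : P) : G.Valid (G.devProf σ τ i) := by
  intro h v
  unfold QGame.devProf
  split
  exacts [hτ h v, hσ h v]

lemma outcomeAux_add (σ : Strat P V) (v : V) (n m : ℕ) :
    outcomeAux σ v (n + m) =
      ((outcomeAux σ v n).1 ++
          (outcomeAux (subStrat σ (outcomeAux σ v n).1) (outcome σ v n) m).1,
        outcome (subStrat σ (outcomeAux σ v n).1) (outcome σ v n) m) := by
  induction m with
  | zero => simp [outcomeAux, outcome]
  | succ m ih =>
    rw [← Nat.add_assoc, outcomeAux_succ, ih]
    simp [outcome, outcomeAux_succ, subStrat]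

lemma outcome_eq_prepend (σ : Strat P V) (v : V) (n : ℕ) :
    outcome σ v = prepend (outcomeAux σ v n).1
      (outcome (subStrat σ (outcomeAux σ v n).1) (outcome σ v n)) := by
  conv_lhs => rw [← prepend_playPrefix (outcome σ v) n]
  rw [outcomeAux_fst]
  congr 1
  funext m
  simp only [outcome, outcomeAux_add, outcomeAux_fst]

lemma devSteps_subStrat (G : QGame P V) (σ τ : Strat P V) (i : P) (v : V) (n : ℕ) :
    G.devSteps (subStrat σ (outcomeAux (G.devProf σ τ i) v n).1)
        (subStrat τ (outcomeAux (G.devProf σ τ i) v n).1) i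
        (outcome (G.devProf σ τ i) v n) =
      (n + ·) ⁻¹' G.devSteps σ τ i v := by
  ext m
  simp only [devSteps, Set.mem_ofPred_eq, Set.mem_preimage, outcome, outcomeAux_add,
    ← subStrat_devProf, subStrat]

lemma subCost_append (G : QGame P V) (h g : List V) (i : P) (ρ : ℕ → V) :
    G.subCost (h ++ g) i ρ = G.subCost h i (prepend g ρ) := by
  simp only [subCost, prepend_append]

def truncate (σ τ : Strat P V) (N : ℕ) : Strat P V :=
  fun g u => if g.length < N then τ g u else σ g u

lemma Valid.truncate {G : QGame P V} {σ τ : Strat P V} (hσ : G.Valid σ) (hτ : G.Valid τ)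
    (N : ℕ) : G.Valid (truncate σ τ N) := by
  intro g u
  unfold QGame.truncate
  split
  exacts [hτ g u, hσ g u]

lemma outcomeAux_devProf_truncate (G : QGame P V) (σ τ : Strat P V) (i : P) (v : V)
    {N m : ℕ} (hm : m ≤ N) :
    outcomeAux (G.devProf σ (truncate σ τ N) i) v m = outcomeAux (G.devProf σ τ i) v m := by
  refine (outcomeAux_congr fun k hk => ?_).symm
  simp only [devProf, truncate, length_outcomeAux_fst, if_pos (show k < N by omega)]

lemma devSteps_truncate_subset (G : QGame P V) (σ τ : Strat P V) (i : P) (v : V) (N : ℕ) :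
    G.devSteps σ (truncate σ τ N) i v ⊆ Set.Iio N := by
  intro m ⟨_, hm⟩
  by_contra hmN
  apply hm
  simp [truncate, show ¬ m < N from hmN]

lemma subStrat_devProf_truncate (G : QGame P V) (σ τ : Strat P V) (i : P) {N : ℕ} {g : List V}
    (hg : N ≤ g.length) : subStrat (G.devProf σ (truncate σ τ N) i) g = subStrat σ g := by
  funext g' u
  simp [subStrat, devProf, truncate, show ¬ g.length + g'.length < N by omega]

lemma outcome_devProf_truncate_of_devSteps_subset (G : QGame P V) {σ τ : Strat P V} {i : P}
    {v : V} {N : ℕ} (hN : G.devSteps σ τ i v ⊆ Set.Iio N) :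
    outcome (G.devProf σ (truncate σ τ N) i) v = outcome (G.devProf σ τ i) v := by
  refine (outcome_congr fun m => ?_).symm
  by_cases hmN : m < N
  · simp [devProf, truncate, hmN]
  · have hm : m ∉ G.devSteps σ τ i v := fun hm => hmN (hN hm)
    simp only [devSteps, Set.mem_ofPred_eq, not_and, not_not, outcome] at hm
    by_cases ho : G.owner (outcomeAux (G.devProf σ τ i) v m).2 = i
    · simp [devProf, truncate, hmN, ho, hm ho]
    · simp [devProf, ho]

lemma outcome_devProf_of_devSteps_eq_empty (G : QGame P V) {σ τ : Strat P V} {i : P} {v : V}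
    (h : G.devSteps σ τ i v = ∅) : outcome (G.devProf σ τ i) v = outcome σ v := by
  rw [← G.outcome_devProf_truncate_of_devSteps_subset (N := 0) (by simp [h])]
  congr 1
  funext g u
  simp [devProf, truncate]

lemma converges_outcome_devProf_truncate (G : QGame P V) (σ τ : Strat P V) (i : P) (v : V) :
    Converges (fun N => outcome (G.devProf σ (truncate σ τ N) i) v)
      (outcome (G.devProf σ τ i) v) :=
  fun m => ⟨m, fun N hN k hk => by
    simp only [outcome, G.outcomeAux_devProf_truncate σ τ i v (show k ≤ N by omega)]⟩

lemma Converges.prepend {ρs : ℕ → ℕ → V} {ρ : ℕ → V} (hρ : Converges ρs ρ)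
    (h : List V) :
    Converges (fun n => QGame.prepend h (ρs n)) (QGame.prepend h ρ) := by
  intro m
  obtain ⟨N, hN⟩ := hρ m
  refine ⟨N, fun n hn k hk => ?_⟩
  rcases lt_or_ge k h.length with hkh | hkh
  · simp only [prepend_of_lt _ hkh]
  · simp only [prepend_of_le _ hkh]
    exact hN n hn _ (by omega)

lemma IsVeryWeakNEwith.le_of_devSteps_subset_zero {G : QGame P V} {c : P → (ℕ → V) → EReal}
    {σ τ : Strat P V} {v : V} (hσ : G.IsVeryWeakNEwith c σ v) {i : P} (hτ : G.Valid τ)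
    (h : G.devSteps σ τ i v ⊆ {0}) :
    c i (outcome σ v) ≤ c i (outcome (G.devProf σ τ i) v) := by
  rcases Set.subset_singleton_iff_eq.mp h with h | h
  · rw [G.outcome_devProf_of_devSteps_eq_empty h]
  · exact hσ i τ hτ h

lemma IsVeryWeakSPE.le_of_devSteps_subset_Iio {G : QGame P V} {v0 v : V} {σ τ : Strat P V}
    {h : List V} {i : P} (hvw : G.IsVeryWeakSPE v0 σ) (hσ : G.Valid σ) (hh : G.IsHist v0 h v)
    (hτ : G.Valid τ) {N : ℕ} (hN : G.devSteps (subStrat σ h) τ i v ⊆ Set.Iio N) :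
    G.subCost h i (outcome (subStrat σ h) v) ≤
      G.subCost h i (outcome (G.devProf (subStrat σ h) τ i) v) := by
  induction N generalizing τ with
  | zero =>
    rw [G.outcome_devProf_of_devSteps_eq_empty (Set.subset_empty_iff.mp (by simpa using hN))]
  | succ N ih =>
    set σ' := subStrat σ h
    set D := G.devProf σ' τ i
    set D₂ := G.devProf σ' (truncate σ' τ N) i
    set g := (outcomeAux D v N).1
    set w := outcome D v N
    -- `D₂` and `D` agree up to step `N`; afterwards `D₂` follows `σ` and `D` deviates at most
    -- once, at step `N`.
    have hD₂ : outcomeAux D₂ v N = outcomeAux D v N :=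
      G.outcomeAux_devProf_truncate σ' τ i v le_rfl
    have hg : g = playPrefix (outcome D v) N := outcomeAux_fst D v N
    have hhist : G.IsHist v0 (h ++ g) w :=
      hg ▸ hh.append_playPrefix (G.outcome_isPlay ((hσ.subStrat h).devProf hτ i) v) rfl N
    have hone : G.devSteps (subStrat σ (h ++ g)) (subStrat τ g) i w ⊆ {0} := by
      intro m hm
      rw [← subStrat_subStrat, G.devSteps_subStrat] at hm
      simpa using hN hm
    calc G.subCost h i (outcome σ' v)
        ≤ G.subCost h i (outcome D₂ v) :=
          ih ((hσ.subStrat h).truncate hτ N) (G.devSteps_truncate_subset σ' τ i v N)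
      _ = G.subCost (h ++ g) i (outcome (subStrat σ (h ++ g)) w) := by
          rw [outcome_eq_prepend D₂ v N, hD₂, G.subStrat_devProf_truncate σ' τ i (by simp),
            subStrat_subStrat, subCost_append,
            show outcome D₂ v N = w from congrArg Prod.snd hD₂]
      _ ≤ G.subCost (h ++ g) i (outcome (G.devProf (subStrat σ (h ++ g)) (subStrat τ g) i) w) :=
          (hvw _ _ hhist).le_of_devSteps_subset_zero (hτ.subStrat g) hone
      _ = G.subCost h i (outcome D v) := by
          rw [subCost_append, ← subStrat_subStrat, ← subStrat_devProf, ← outcome_eq_prepend]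

lemma IsVeryWeakSPE.isWeakSPE {G : QGame P V} {v0 : V} {σ : Strat P V} (hσ : G.Valid σ)
    (hvw : G.IsVeryWeakSPE v0 σ) : G.IsWeakSPE v0 σ := by
  intro h v hh i τ hτ hfin
  obtain ⟨M, hM⟩ := hfin.bddAbove
  exact hvw.le_of_devSteps_subset_Iio hσ hh hτ (N := M + 1)
    fun m hm => Nat.lt_succ_of_le (hM hm)

lemma IsWeakSPE.isVeryWeakSPE {G : QGame P V} {v0 : V} {σ : Strat P V}
    (hw : G.IsWeakSPE v0 σ) : G.IsVeryWeakSPE v0 σ :=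
  fun h v hh i τ hτ hone =>
    hw h v hh i τ hτ (by rw [FinDev, hone]; exact Set.finite_singleton 0)

lemma IsSPE.isWeakSPE {G : QGame P V} {v0 : V} {σ : Strat P V} (hs : G.IsSPE v0 σ) :
    G.IsWeakSPE v0 σ :=
  fun h v hh i τ hτ _ => hs h v hh i τ hτ

lemma IsWeakSPE.isSPE {G : QGame P V} {v0 : V} {σ : Strat P V} (hσ : G.Valid σ)
    (husc : ∀ i, G.USCcost (G.cost i)) (hw : G.IsWeakSPE v0 σ) : G.IsSPE v0 σ := by
  intro h v hh i τ hτ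
  set σ' := subStrat σ h
  have hplay : ∀ τ, G.Valid τ → G.IsPlay (prepend h (outcome (G.devProf σ' τ i) v)) :=
    fun τ hτ => G.isPlay_prepend hh.2 (G.outcome_isPlay ((hσ.subStrat h).devProf hτ i) v) rfl
  have htrunc : ∀ N, G.Valid (truncate σ' τ N) := (hσ.subStrat h).truncate hτ
  calc G.subCost h i (outcome σ' v)
      ≤ Filter.limsup
          (fun N => G.cost i (prepend h (outcome (G.devProf σ' (truncate σ' τ N) i) v)))
          Filter.atTop :=
        Filter.le_limsup_of_frequently_le (Filter.Frequently.of_forall fun N =>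
          hw h v hh i _ (htrunc N) ((Set.finite_Iio N).subset (G.devSteps_truncate_subset ..)))
    _ ≤ G.subCost h i (outcome (G.devProf σ' τ i) v) :=
        husc i _ _ (fun N => hplay _ (htrunc N)) (hplay τ hτ)
          ((G.converges_outcome_devProf_truncate σ' τ i v).prepend h)

end QGame

open QGame in
theorem usc_weakSPE_is_SPE_general {P V : Type}
    (G : QGame P V) (v0 : V) (σ : Strat P V) (hσ : G.Valid σ)
    (husc : ∀ i, G.USCcost (G.cost i)) :
    (G.IsWeakSPE v0 σ → G.IsSPE v0 σ) ∧
    (G.IsSPE v0 σ ↔ G.IsWeakSPE v0 σ) ∧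
    (G.IsWeakSPE v0 σ ↔ G.IsVeryWeakSPE v0 σ) :=
  have weak_to_SPE := IsWeakSPE.isSPE hσ husc
  ⟨weak_to_SPE, ⟨IsSPE.isWeakSPE, weak_to_SPE⟩,
    ⟨IsWeakSPE.isVeryWeakSPE, IsVeryWeakSPE.isWeakSPE hσ⟩⟩

open QGame in
/-- If all cost functions of a quantitative game are
upper-semicontinuous, then every weak subgame perfect equilibrium is a
subgame perfect equilibrium; hence the notions of SPE, weak SPE and very
weak SPE coincide. -/
theorem usc_weakSPE_is_SPE {P V : Type} [Finite P] [Finite V]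
    (G : QGame P V) (v0 : V) (σ : Strat P V) (hσ : G.Valid σ)
    (husc : ∀ i, G.USCcost (G.cost i)) :
    (G.IsWeakSPE v0 σ → G.IsSPE v0 σ) ∧
    (G.IsSPE v0 σ ↔ G.IsWeakSPE v0 σ) ∧
    (G.IsWeakSPE v0 σ ↔ G.IsVeryWeakSPE v0 σ) :=
  usc_weakSPE_is_SPE_general G v0 σ hσ husc
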